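/- arXiv:quant-ph/0208043 — 2 statements merged into one kernel-verified Lean document; each statement's English description precedes it below -/
import Mathlib

section
/- Let n ≥ 1 be an integer and m = ⌈log₂(n+1)⌉. For every natural number w with w ≤ n: w ≠ 0 if and only if there exists an integer k with 1 ≤ k ≤ m such that exp(2πi·w/2^k) = −1. -/
/-!
Write `w = 2^v u` with `u` odd. Then `exp(2πi w / 2^(v+1)) = exp(πi u) = -1`, and `v + 1` is in
range because `2^v ≤ w ≤ n < 2^m`. For `w = 0` every phase is `exp 0 = 1 ≠ -1`.
-/

open Complex

lemma Complex.exp_nat_mul_pi_mul_I_of_odd {u : ℕ} (hu : Odd u) :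
    exp (u * (Real.pi * I)) = -1 := by
  rw [exp_nat_mul, exp_pi_mul_I, hu.neg_one_pow]

lemma Nat.factorization_lt_clog_succ {p w n : ℕ} (hp : 1 < p) (hw0 : w ≠ 0) (hw : w ≤ n) :
    w.factorization p < Nat.clog p (n + 1) :=
  (Nat.lt_clog_iff_pow_lt hp).2 (Nat.lt_succ_of_le ((Nat.ordProj_le p hw0).trans hw))

lemma Complex.exp_two_pi_mul_div_two_pow_factorization_succ {w : ℕ} (hw0 : w ≠ 0) :
    exp (2 * Real.pi * w / 2 ^ (w.factorization 2 + 1) * I) = -1 := by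
  have hodd : Odd (ordCompl[2] w) :=
    Nat.odd_iff.mpr (Nat.two_dvd_ne_zero.mp (Nat.not_dvd_ordCompl Nat.prime_two hw0))
  have hw : (w : ℂ) = 2 ^ w.factorization 2 * (ordCompl[2] w : ℕ) := by
    exact_mod_cast (Nat.ordProj_mul_ordCompl_eq_self w 2).symm
  have harg : 2 * (Real.pi : ℂ) * w / 2 ^ (w.factorization 2 + 1) * I
      = (ordCompl[2] w : ℕ) * (Real.pi * I) := by
    rw [hw]
    field_simp
    ring
  rw [harg, exp_nat_mul_pi_mul_I_of_odd hodd]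

theorem or_reduction_correct_general (n : ℕ) (w : ℕ) (hw : w ≤ n) :
    w ≠ 0 ↔ ∃ k : ℕ, 1 ≤ k ∧ k ≤ Nat.clog 2 (n + 1) ∧
      Complex.exp (2 * Real.pi * w / 2 ^ k * Complex.I) = -1 := by
  constructor
  · intro hw0
    exact ⟨w.factorization 2 + 1, Nat.le_add_left 1 _,
      Nat.factorization_lt_clog_succ one_lt_two hw0 hw,
      exp_two_pi_mul_div_two_pow_factorization_succ hw0⟩
  · rintro ⟨k, -, -, hk⟩ rfl
    norm_num at hk

/-- Correctness of the exact Or-reduction from `n` bits to `m = ⌈log₂(n+1)⌉`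
bits: for `w ≤ n`, `w ≠ 0` iff `exp(2πi·w/2^k) = −1` for some `1 ≤ k ≤ m`. -/
theorem or_reduction_correct (n : ℕ) (hn : 1 ≤ n) (w : ℕ) (hw : w ≤ n) :
    w ≠ 0 ↔ ∃ k : ℕ, 1 ≤ k ∧ k ≤ Nat.clog 2 (n + 1) ∧
      Complex.exp (2 * Real.pi * w / 2 ^ k * Complex.I) = -1 :=
  or_reduction_correct_general n w hw
end

section
/- For every integer q ≥ 1 and every real number α with |α| ≤ π/(4q), the modulus of ∑_{y=0}^{q−1} e^{iαy} is at least q/√2. -/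
open Finset

/-
Every phase `α y` with `y < q` lies in `[-π/4, π/4]`, so every summand has real part at least
`cos (π/4) = 1/√2`; the real part of the sum, and hence its modulus, is then at least `q/√2`.
-/

theorem Complex.card_mul_le_norm_sum_of_le_re {ι : Type*} (s : Finset ι) (f : ι → ℂ)
    {c : ℝ} (hc : ∀ i ∈ s, c ≤ (f i).re) : #s * c ≤ ‖∑ i ∈ s, f i‖ :=
  calc #s * c ≤ ∑ i ∈ s, (f i).re := by simpa using card_nsmul_le_sum s _ c hc
    _ = (∑ i ∈ s, f i).re := (re_sum s f).symm
    _ ≤ ‖∑ i ∈ s, f i‖ := re_le_norm _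

theorem Real.inv_sqrt_two_le_cos_of_abs_le {θ : ℝ} (hθ : |θ| ≤ Real.pi / 4) :
    (√2)⁻¹ ≤ cos θ := by
  rw [← sqrt_div_self, ← cos_pi_div_four, ← cos_abs θ]
  exact cos_le_cos_of_nonneg_of_le_pi (abs_nonneg θ) (by linarith [pi_pos]) hθ

theorem abs_mul_natCast_le_of_abs_le_div {α b : ℝ} {q y : ℕ} (hα : |α| ≤ b / q)
    (hy : y < q) : |α * y| ≤ b := by
  have hq : (0 : ℝ) < q := by exact_mod_cast y.zero_le.trans_lt hy
  calc |α * y| = |α| * y := by rw [abs_mul, Nat.abs_cast]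
    _ ≤ b / q * q :=
      mul_le_mul hα (by exact_mod_cast hy.le) y.cast_nonneg ((abs_nonneg α).trans hα)
    _ = b := div_mul_cancel₀ b hq.ne'

theorem abs_sum_exp_ge_of_small_angle_general (q : ℕ) (α : ℝ)
    (hα : |α| ≤ Real.pi / (4 * q)) :
    (q : ℝ) / Real.sqrt 2 ≤
      ‖∑ y ∈ Finset.range q, Complex.exp (α * y * Complex.I)‖ := by
  have hphase : ∀ y ∈ range q, |α * y| ≤ Real.pi / 4 := fun y hy =>
    abs_mul_natCast_le_of_abs_le_div (by rwa [div_div]) (mem_range.mp hy)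
  simpa [div_eq_mul_inv (q : ℝ)] using
    Complex.card_mul_le_norm_sum_of_le_re (range q) _ fun y hy => by
      rw [← Complex.ofReal_natCast, ← Complex.ofReal_mul, Complex.exp_ofReal_mul_I_re]
      exact Real.inv_sqrt_two_le_cos_of_abs_le (hphase y hy)

/-- Constructive-interference bound: for `q ≥ 1` and `|α| ≤ π/(4q)`,
`|∑_{y=0}^{q−1} e^{iαy}| ≥ q/√2`. -/
theorem abs_sum_exp_ge_of_small_angle (q : ℕ) (hq : 1 ≤ q) (α : ℝ)
    (hα : |α| ≤ Real.pi / (4 * q)) :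
    (q : ℝ) / Real.sqrt 2 ≤
      ‖∑ y ∈ Finset.range q, Complex.exp (α * y * Complex.I)‖ :=
  abs_sum_exp_ge_of_small_angle_general q α hα
end
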